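/- Let X be a real Banach space containing an isomorphic copy of c₀ and possessing a countable norming system of functionals. Then X is isomorphic to a closed subspace X₁ of ℓ∞ containing the canonical copy of c₀ inside ℓ∞. -/

import Mathlib

noncomputable section
open NormedSpace ZeroAtInfty Filter Topology

/-- `X` contains an isomorphic copy of `c₀`. -/
def ContainsC0 (X : Type*) [NormedAddCommGroup X] [NormedSpace ℝ X] : Prop :=
  ∃ T : C₀(ℕ, ℝ) →L[ℝ] X, ∃ c > 0, ∀ u : C₀(ℕ, ℝ), c * ‖u‖ ≤ ‖T u‖

/-- `X` possesses a countable norming system of functionals. -/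
def HasCountableNormingSystem (X : Type*) [NormedAddCommGroup X] [NormedSpace ℝ X] : Prop :=
  ∃ (g : ℕ → StrongDual ℝ X) (K M : ℝ), 0 ≤ K ∧ (∀ n, ‖g n‖ ≤ M) ∧
    ∀ x : X, ‖x‖ ≤ K * ⨆ n, |g n x|

/-- The space `ℓ∞` of bounded real sequences. -/
abbrev ellInfty : Type := lp (fun _ : ℕ => ℝ) ⊤

/-!
The norming functionals give an isomorphic embedding `J x = (g n x)ₙ` of `X` into `ℓ∞`, under which
the copy `T(c₀)` becomes an isomorphic copy `S = J ∘ T` of `c₀` in `ℓ∞`. As `ℓ∞` is injective, there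
are operators `Q, W` on `ℓ∞` with `Q ∘ S = ι` and `W ∘ ι = S`, `ι : c₀ → ℓ∞` being the inclusion.
Then `x ↦ (a, v) = (Q J x, J x - W Q J x)` embeds `X` isomorphically into `ℓ∞ × ℓ∞`, because
`J x = W a + v`, and it sends `T u` to `(ι u, 0)`.

It remains to embed `ℓ∞ × ℓ∞` into `ℓ∞` so that `(a, 0) ↦ a` for `a ∈ c₀`. Split `ℕ` into infinite
blocks `B (t, k)` and let `L (t, k)` (`blockLim`) be the limit along a free ultrafilter on
`B (t, k)`; these functionals vanish on `c₀`. Setting `ψ a = a - (L (t, k) a - L (t, k - 1) a)` on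
`B (t, k)`, with `L (t, -1) = 0`, gives `L (t, 0) ∘ ψ = 0` and `L (t, k + 1) ∘ ψ = L (t, k)`, so every
`L (t, k) a`, hence `a` itself, can be read off from `ψ a` (`blockShift`), while `ψ` fixes `c₀`.
Finally `v` is added as the constant `v t` on `B (t, 0)` (`blockConst`), and is recovered as
`(L (t, 0))ₜ`.
-/

open scoped lp ENNReal NNReal

theorem AntilipschitzWith.of_lipschitzWith_comp {α β γ : Type*} [PseudoEMetricSpace α]
    [PseudoEMetricSpace β] [PseudoEMetricSpace γ] {K L : ℝ≥0} {f : α → β} {g : β → γ}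
    (hg : LipschitzWith L g) (hgf : AntilipschitzWith K (g ∘ f)) :
    AntilipschitzWith (K * L) f := fun x y =>
  calc edist x y ≤ K * edist (g (f x)) (g (f y)) := hgf x y
    _ ≤ K * (L * edist (f x) (f y)) := by gcongr; exact hg (f x) (f y)
    _ = ↑(K * L) * edist (f x) (f y) := by rw [ENNReal.coe_mul, mul_assoc]

namespace lp

variable {ι E : Type*} [NormedAddCommGroup E] [NormedSpace ℝ E]

@[simp]
theorem evalCLM_apply (i : ι) (y : ℓ^∞(ι, ℝ)) : evalCLM ℝ (fun _ : ι => ℝ) ∞ i y = y i :=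
  rfl

theorem norm_evalCLM_le (i : ι) : ‖evalCLM ℝ (fun _ : ι => ℝ) ∞ i‖ ≤ 1 :=
  ContinuousLinearMap.opNorm_le_bound _ zero_le_one fun y => by
    simpa using norm_apply_le_norm ENNReal.top_ne_zero y i

def ofBoundedFunctionals (f : ι → StrongDual ℝ E) (hf : ∃ C, ∀ i, ‖f i‖ ≤ C) :
    E →L[ℝ] ℓ^∞(ι, ℝ) :=
  LinearMap.mkContinuousOfExistsBound
    { toFun := fun x => ⟨fun i => f i x, memℓp_infty <| by
        obtain ⟨C, hC⟩ := hf
        exact ⟨C * ‖x‖, by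
          rintro _ ⟨i, rfl⟩
          exact (f i).le_opNorm x |>.trans (by gcongr; exact hC i)⟩⟩
      map_add' := fun x y => lp.ext <| funext fun i => map_add (f i) x y
      map_smul' := fun c x => lp.ext <| funext fun i => map_smul (f i) c x }
    (by
      obtain ⟨C, hC⟩ := hf
      refine ⟨max C 0, fun x => lp.norm_le_of_forall_le (by positivity) fun i => ?_⟩
      exact (f i).le_opNorm x |>.trans (by gcongr; exact (hC i).trans (le_max_left C 0)))

@[simp]
theorem ofBoundedFunctionals_apply (f : ι → StrongDual ℝ E) (hf : ∃ C, ∀ i, ‖f i‖ ≤ C)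
    (x : E) (i : ι) : ofBoundedFunctionals f hf x i = f i x :=
  rfl

theorem exists_extension_infty (p : Submodule ℝ E) (f : p →L[ℝ] ℓ^∞(ι, ℝ)) :
    ∃ g : E →L[ℝ] ℓ^∞(ι, ℝ), ∀ x : p, g x = f x := by
  have h : ∀ i, ∃ gi : StrongDual ℝ E, (∀ x : p, gi x = f x i) ∧ ‖gi‖ ≤ ‖f‖ := fun i => by
    obtain ⟨gi, hgi, hnorm⟩ := exists_extension_norm_eq p ((evalCLM ℝ _ ∞ i).comp f)
    refine ⟨gi, hgi, hnorm ▸ ContinuousLinearMap.opNorm_le_bound _ (norm_nonneg f) fun x => ?_⟩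
    exact (norm_apply_le_norm ENNReal.top_ne_zero (f x) i).trans (f.le_opNorm x)
  choose g hg hgnorm using h
  exact ⟨ofBoundedFunctionals g ⟨‖f‖, hgnorm⟩, fun x => lp.ext <| funext fun i => hg i x⟩

theorem exists_comp_eq_of_antilipschitz [CompleteSpace E] {F : Type*} [NormedAddCommGroup F]
    [NormedSpace ℝ F] [CompleteSpace F] (S : E →L[ℝ] F) {K : ℝ≥0} (hS : AntilipschitzWith K S)
    (G : E →L[ℝ] ℓ^∞(ι, ℝ)) : ∃ Q : F →L[ℝ] ℓ^∞(ι, ℝ), Q ∘L S = G := by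
  let e := S.equivRange hS.injective (hS.isClosed_range S.uniformContinuous)
  obtain ⟨Q, hQ⟩ := exists_extension_infty _ (G ∘L e.symm.toContinuousLinearMap)
  exact ⟨Q, ContinuousLinearMap.ext fun x => by simpa [e] using hQ ⟨S x, by simp⟩⟩

theorem exists_tendsto_ultrafilter (𝒰 : Ultrafilter ι) (y : ℓ^∞(ι, ℝ)) :
    ∃ l, Tendsto y 𝒰 (𝓝 l) := by
  obtain ⟨l, -, hl⟩ := (isCompact_closedBall (0 : ℝ) ‖y‖).ultrafilter_le_nhds' (𝒰.map y) <| by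
    rw [Ultrafilter.mem_map]
    exact Filter.univ_mem' fun i => by simpa using norm_apply_le_norm ENNReal.top_ne_zero y i
  exact ⟨l, hl⟩

def ultrafilterLim (𝒰 : Ultrafilter ι) : StrongDual ℝ ℓ^∞(ι, ℝ) :=
  have hlim (y : ℓ^∞(ι, ℝ)) : Tendsto y 𝒰 (𝓝 (limUnder 𝒰 y)) :=
    tendsto_nhds_limUnder (exists_tendsto_ultrafilter 𝒰 y)
  LinearMap.mkContinuous
    { toFun := fun y => limUnder 𝒰 y
      map_add' := fun y z => ((hlim y).add (hlim z)).limUnder_eq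
      map_smul' := fun c y => ((hlim y).const_smul c).limUnder_eq }
    1 fun y => by
      rw [one_mul]
      exact le_of_tendsto (hlim y).norm
        (Eventually.of_forall fun i => norm_apply_le_norm ENNReal.top_ne_zero y i)

theorem tendsto_ultrafilterLim (𝒰 : Ultrafilter ι) (y : ℓ^∞(ι, ℝ)) :
    Tendsto y 𝒰 (𝓝 (ultrafilterLim 𝒰 y)) :=
  tendsto_nhds_limUnder (exists_tendsto_ultrafilter 𝒰 y)

theorem norm_ultrafilterLim_le (𝒰 : Ultrafilter ι) : ‖ultrafilterLim 𝒰‖ ≤ 1 := by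
  unfold ultrafilterLim; exact LinearMap.mkContinuous_norm_le _ zero_le_one _

end lp

def c0ToEllInfty : C₀(ℕ, ℝ) →ₗᵢ[ℝ] ellInfty where
  toFun u := (lpBCFₗᵢ ℝ ℝ).symm u.toBCF
  map_add' _ _ := lp.ext rfl
  map_smul' _ _ := lp.ext rfl
  norm_map' u := ((lpBCFₗᵢ ℝ ℝ).symm.norm_map u.toBCF).trans
    ZeroAtInftyContinuousMap.norm_toBCF_eq_norm

theorem tendsto_c0ToEllInfty (u : C₀(ℕ, ℝ)) : Tendsto (c0ToEllInfty u) atTop (𝓝 0) := by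
  have hu := zero_at_infty u
  rwa [cocompact_eq_cofinite, Nat.cofinite_eq_atTop] at hu

theorem exists_c0ToEllInfty_eq {y : ellInfty} (hy : Tendsto y atTop (𝓝 0)) :
    ∃ u, c0ToEllInfty u = y :=
  ⟨⟨⟨y, continuous_of_discreteTopology⟩, by
    rwa [cocompact_eq_cofinite, Nat.cofinite_eq_atTop]⟩, rfl⟩
def blockIndex (b : ℕ × ℕ) (i : ℕ) : ℕ := Nat.pair (Nat.pair b.1 b.2) i

def blockOf (n : ℕ) : ℕ × ℕ := Nat.unpair (Nat.unpair n).1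

@[simp]
theorem blockOf_blockIndex (b : ℕ × ℕ) (i : ℕ) : blockOf (blockIndex b i) = b := by
  simp [blockOf, blockIndex]

theorem blockIndex_injective (b : ℕ × ℕ) : Function.Injective (blockIndex b) :=
  fun _ _ h => (Nat.pair_eq_pair.mp h).2

def blockLim (b : ℕ × ℕ) : StrongDual ℝ ellInfty :=
  lp.ultrafilterLim ((hyperfilter ℕ).map (blockIndex b))

theorem tendsto_blockLim (b : ℕ × ℕ) (y : ellInfty) :
    Tendsto (fun i => y (blockIndex b i)) (hyperfilter ℕ) (𝓝 (blockLim b y)) := by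
  have h := lp.tendsto_ultrafilterLim ((hyperfilter ℕ).map (blockIndex b)) y
  rwa [Ultrafilter.coe_map, tendsto_map'_iff] at h

theorem blockLim_eq_of_tendsto {b : ℕ × ℕ} {y : ellInfty} {l : ℝ}
    (h : Tendsto (fun i => y (blockIndex b i)) (hyperfilter ℕ) (𝓝 l)) : blockLim b y = l :=
  tendsto_nhds_unique (tendsto_blockLim b y) h

theorem blockLim_eq_zero_of_tendsto_zero (b : ℕ × ℕ) {y : ellInfty}
    (hy : Tendsto y atTop (𝓝 0)) : blockLim b y = 0 :=
  blockLim_eq_of_tendsto <| (hy.comp <| Nat.cofinite_eq_atTop ▸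
    (blockIndex_injective b).tendsto_cofinite).mono_left hyperfilter_le_cofinite

theorem norm_blockLim_le (b : ℕ × ℕ) : ‖blockLim b‖ ≤ 1 :=
  lp.norm_ultrafilterLim_le _

theorem abs_blockLim_le (b : ℕ × ℕ) (y : ellInfty) : |blockLim b y| ≤ ‖y‖ :=
  ((blockLim b).le_opNorm y).trans (mul_le_of_le_one_left (norm_nonneg y) (norm_blockLim_le b))

def prevBlockLim : ℕ × ℕ → StrongDual ℝ ellInfty
  | (_, 0) => 0
  | (t, k + 1) => blockLim (t, k)

theorem norm_prevBlockLim_le : ∀ b, ‖prevBlockLim b‖ ≤ 1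
  | (_, 0) => by simp [prevBlockLim]
  | (_, _ + 1) => norm_blockLim_le _

theorem prevBlockLim_eq_zero_of_tendsto_zero {y : ellInfty} (hy : Tendsto y atTop (𝓝 0)) :
    ∀ b, prevBlockLim b y = 0
  | (_, 0) => rfl
  | (_, _ + 1) => blockLim_eq_zero_of_tendsto_zero _ hy

def blockShift : ellInfty →L[ℝ] ellInfty :=
  lp.ofBoundedFunctionals
    (fun n => lp.evalCLM ℝ _ ∞ n - (blockLim (blockOf n) - prevBlockLim (blockOf n)))
    ⟨1 + (1 + 1), fun n => (norm_sub_le _ _).trans <| add_le_add (lp.norm_evalCLM_le n) <|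
      (norm_sub_le _ _).trans <| add_le_add (norm_blockLim_le _) (norm_prevBlockLim_le _)⟩

theorem blockShift_apply (y : ellInfty) (n : ℕ) :
    blockShift y n = y n - (blockLim (blockOf n) y - prevBlockLim (blockOf n) y) :=
  rfl

theorem blockLim_blockShift (b : ℕ × ℕ) (y : ellInfty) :
    blockLim b (blockShift y) = prevBlockLim b y :=
  blockLim_eq_of_tendsto <| by
    simpa [blockShift_apply] using (tendsto_blockLim b y).sub_const (blockLim b y - prevBlockLim b y)

theorem norm_le_three_mul_norm_blockShift (y : ellInfty) : ‖y‖ ≤ 3 * ‖blockShift y‖ := by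
  refine lp.norm_le_of_forall_le (by positivity) fun n => ?_
  rcases hb : blockOf n with ⟨t, k⟩
  have hcur : |blockLim (t, k) y| ≤ ‖blockShift y‖ := by
    simpa [blockLim_blockShift, prevBlockLim] using abs_blockLim_le (t, k + 1) (blockShift y)
  have hprev : |prevBlockLim (t, k) y| ≤ ‖blockShift y‖ := by
    simpa [blockLim_blockShift] using abs_blockLim_le (t, k) (blockShift y)
  have hn : y n = blockShift y n + (blockLim (t, k) y - prevBlockLim (t, k) y) := by
    rw [blockShift_apply, hb]; ring
  rw [Real.norm_eq_abs, hn]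
  calc _ ≤ |blockShift y n| + (|blockLim (t, k) y| + |prevBlockLim (t, k) y|) :=
        (abs_add_le _ _).trans (by gcongr; exact abs_sub _ _)
    _ ≤ ‖blockShift y‖ + (‖blockShift y‖ + ‖blockShift y‖) := by
        gcongr
        simpa using lp.norm_apply_le_norm ENNReal.top_ne_zero (blockShift y) n
    _ = 3 * ‖blockShift y‖ := by ring

theorem blockShift_eq_self_of_tendsto_zero {y : ellInfty} (hy : Tendsto y atTop (𝓝 0)) :
    blockShift y = y :=
  lp.ext <| funext fun n => by
    simp [blockShift_apply, blockLim_eq_zero_of_tendsto_zero _ hy,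
      prevBlockLim_eq_zero_of_tendsto_zero hy]

def blockConst : ellInfty →L[ℝ] ellInfty :=
  lp.ofBoundedFunctionals
    (fun n => if (blockOf n).2 = 0 then lp.evalCLM ℝ _ ∞ (blockOf n).1 else 0)
    ⟨1, fun n => by split_ifs <;> simp [lp.norm_evalCLM_le]⟩

theorem blockLim_blockConst (t : ℕ) (v : ellInfty) : blockLim (t, 0) (blockConst v) = v t :=
  blockLim_eq_of_tendsto <| by simp [blockConst]

theorem antilipschitz_blockShift_coprod_blockConst :
    AntilipschitzWith (3 * (1 + ‖blockConst‖₊)) (blockShift.coprod blockConst) := by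
  refine ContinuousLinearMap.antilipschitz_of_bound _ fun ⟨a, v⟩ => ?_
  set z := blockShift a + blockConst v with hz
  have hv : ‖v‖ ≤ ‖z‖ := lp.norm_le_of_forall_le (norm_nonneg z) fun t => by
    have hzt : blockLim (t, 0) z = v t := by
      rw [hz, map_add, blockLim_blockShift, blockLim_blockConst]
      simp [prevBlockLim]
    simpa [hzt] using abs_blockLim_le (t, 0) z
  have ha : ‖a‖ ≤ 3 * (1 + ‖blockConst‖) * ‖z‖ :=
    calc ‖a‖ ≤ 3 * ‖z - blockConst v‖ := by
          rw [hz, add_sub_cancel_right]; exact norm_le_three_mul_norm_blockShift a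
      _ ≤ 3 * (‖z‖ + ‖blockConst‖ * ‖v‖) := by
          gcongr; exact (norm_sub_le _ _).trans (by gcongr; exact blockConst.le_opNorm v)
      _ ≤ 3 * (‖z‖ + ‖blockConst‖ * ‖z‖) := by gcongr
      _ = 3 * (1 + ‖blockConst‖) * ‖z‖ := by ring
  have hv' : ‖v‖ ≤ 3 * (1 + ‖blockConst‖) * ‖z‖ :=
    hv.trans (le_mul_of_one_le_left (norm_nonneg z) (by nlinarith [norm_nonneg blockConst]))
  simpa [norm_prod_le_iff] using ⟨ha, hv'⟩

theorem ContainsC0.exists_antilipschitz {X : Type*} [NormedAddCommGroup X] [NormedSpace ℝ X]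
    (h : ContainsC0 X) : ∃ (T : C₀(ℕ, ℝ) →L[ℝ] X) (K : ℝ≥0), AntilipschitzWith K T := by
  obtain ⟨T, c, hc, hT⟩ := h
  refine ⟨T, c⁻¹.toNNReal, T.antilipschitz_of_bound fun u => ?_⟩
  rw [Real.coe_toNNReal _ (inv_nonneg.2 hc.le), inv_mul_eq_div, le_div_iff₀ hc, mul_comm]
  exact hT u

theorem HasCountableNormingSystem.exists_antilipschitz {X : Type*} [NormedAddCommGroup X]
    [NormedSpace ℝ X] (h : HasCountableNormingSystem X) :
    ∃ (J : X →L[ℝ] ellInfty) (K : ℝ≥0), AntilipschitzWith K J := by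
  obtain ⟨g, K, M, hK, hgM, hnorm⟩ := h
  let J := lp.ofBoundedFunctionals g ⟨M, hgM⟩
  refine ⟨J, K.toNNReal, J.antilipschitz_of_bound fun x => (hnorm x).trans ?_⟩
  rw [Real.coe_toNNReal _ hK]
  exact mul_le_mul_of_nonneg_left (ciSup_le fun n => by
    simpa [J] using lp.norm_apply_le_norm ENNReal.top_ne_zero (J x) n) hK

theorem exists_antilipschitz_comp_eq_c0ToEllInfty {X : Type*} [NormedAddCommGroup X]
    [NormedSpace ℝ X] (J : X →L[ℝ] ellInfty) {KJ : ℝ≥0} (hJ : AntilipschitzWith KJ J)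
    (T : C₀(ℕ, ℝ) →L[ℝ] X) {KT : ℝ≥0} (hT : AntilipschitzWith KT T) :
    ∃ (Φ : X →L[ℝ] ellInfty) (K : ℝ≥0), AntilipschitzWith K Φ ∧
      ∀ u, Φ (T u) = c0ToEllInfty u := by
  let ι := c0ToEllInfty.toContinuousLinearMap
  obtain ⟨Q, hQ⟩ := lp.exists_comp_eq_of_antilipschitz (J ∘L T) (hJ.comp hT) ι
  obtain ⟨W, hW⟩ := lp.exists_comp_eq_of_antilipschitz ι c0ToEllInfty.antilipschitz (J ∘L T)
  let P := (Q ∘L J).prod (J - W ∘L Q ∘L J)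
  have hJP : ⇑(W.coprod (.id ℝ ellInfty)) ∘ ⇑P = ⇑J := by
    funext x; simp [P]
  have hP : AntilipschitzWith (KJ * ‖W.coprod (.id ℝ ellInfty)‖₊) P :=
    .of_lipschitzWith_comp (W.coprod (.id ℝ ellInfty)).lipschitz (hJP ▸ hJ)
  refine ⟨(blockShift.coprod blockConst) ∘L P, _,
    antilipschitz_blockShift_coprod_blockConst.comp hP, fun u => ?_⟩
  have hQu : Q (J (T u)) = c0ToEllInfty u := congr($hQ u)
  have hWu : W (c0ToEllInfty u) = J (T u) := congr($hW u)
  simp [P, hQu, hWu, blockShift_eq_self_of_tendsto_zero (tendsto_c0ToEllInfty u)]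

theorem isomorphic_to_subspace_of_ellInfty_containing_c0
    (X : Type*) [NormedAddCommGroup X] [NormedSpace ℝ X] [CompleteSpace X]
    (hc0 : ContainsC0 X) (hns : HasCountableNormingSystem X) :
    ∃ X₁ : Submodule ℝ ellInfty, IsClosed (X₁ : Set ellInfty) ∧
      (∀ y : ellInfty, Tendsto (fun n => y n) atTop (𝓝 (0 : ℝ)) → y ∈ X₁) ∧
      Nonempty (X ≃L[ℝ] X₁) := by
  obtain ⟨T, KT, hT⟩ := hc0.exists_antilipschitz
  obtain ⟨J, KJ, hJ⟩ := hns.exists_antilipschitz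
  obtain ⟨Φ, K, hΦ, hΦT⟩ := exists_antilipschitz_comp_eq_c0ToEllInfty J hJ T hT
  have hclosed : IsClosed (Set.range Φ) := hΦ.isClosed_range Φ.uniformContinuous
  refine ⟨LinearMap.range (Φ : X →ₗ[ℝ] ellInfty), hclosed, fun y hy => ?_,
    ⟨Φ.equivRange hΦ.injective hclosed⟩⟩
  obtain ⟨u, rfl⟩ := exists_c0ToEllInfty_eq hy
  exact ⟨T u, hΦT u⟩
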